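/- arXiv:2202.06009 — 4 statements merged into one kernel-verified Lean document; each statement's English description precedes it below -/
import Mathlib

section
/- Consider n workers running the double error-feedback compression scheme: each worker i keeps an error vector δ_t^{(i)} ∈ ℝ^d with δ_0^{(i)} = 0 and updates δ_{t+1}^{(i)} = z_t^{(i)} + δ_t^{(i)} − 𝒞[z_t^{(i)} + δ_t^{(i)}], and the server keeps δ̄_t with δ̄_0 = 0 and δ̄_{t+1} = (1/n)Σ_{i=1}^n ẑ_t^{(i)} + δ̄_t − 𝒞[(1/n)Σ_{i=1}^n ẑ_t^{(i)} + δ̄_t], where ẑ_t^{(i)} = 𝒞[z_t^{(i)} + δ_t^{(i)}]. Suppose the compressor 𝒞 satisfies E‖𝒞[x] − x‖² ≤ ω‖x‖² for a constant 0 ≤ ω < 1, and suppose E‖z_t^{(i)}‖² ≤ C for all i and t, for a constant C > 0. Then for every worker i and every t ≥ 1, E‖δ_t^{(i)}‖² ≤ 2ω(1+ω)C/(1−ω)². -/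
/-!
Only the worker recursion matters. Since `δₜ₊₁ = (zₜ + δₜ) - 𝒞[zₜ + δₜ]`, the compressor bound gives
`E‖δₜ₊₁‖² ≤ ω E‖zₜ + δₜ‖²`, and Young's inequality with `η = 2ω/(1-ω)` turns this into the
affine recursion `E‖δₜ₊₁‖² ≤ ω(1+ω)C/(1-ω) + (1+ω)/2 · E‖δₜ‖²`. Its fixed point is
`2ω(1+ω)C/(1-ω)²`, which bounds `E‖δ₀‖² = 0` and hence every `E‖δₜ‖²`.
-/

open MeasureTheory

/-- Young's inequality `‖a + b‖² ≤ (1 + η)‖a‖² + (1 + η⁻¹)‖b‖²`, multiplied by `η` so that it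
also holds for `η = 0`. -/
theorem mul_norm_add_sq_le {E : Type*} [SeminormedAddCommGroup E] {η : ℝ} (hη : 0 ≤ η)
    (a b : E) : η * ‖a + b‖ ^ 2 ≤ η * (1 + η) * ‖a‖ ^ 2 + (1 + η) * ‖b‖ ^ 2 :=
  calc η * ‖a + b‖ ^ 2 ≤ η * (‖a‖ + ‖b‖) ^ 2 := by gcongr; exact norm_add_le a b
    _ ≤ η * (1 + η) * ‖a‖ ^ 2 + (1 + η) * ‖b‖ ^ 2 := by
      nlinarith [sq_nonneg (η * ‖a‖ - ‖b‖)]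

theorem mul_integral_norm_add_sq_le {Ω E : Type*} [MeasurableSpace Ω] {μ : Measure Ω}
    [SeminormedAddCommGroup E] {η : ℝ} (hη : 0 ≤ η) {f g : Ω → E}
    (hf : Integrable (fun w => ‖f w‖ ^ 2) μ) (hg : Integrable (fun w => ‖g w‖ ^ 2) μ) :
    η * ∫ w, ‖f w + g w‖ ^ 2 ∂μ ≤
      η * (1 + η) * ∫ w, ‖f w‖ ^ 2 ∂μ + (1 + η) * ∫ w, ‖g w‖ ^ 2 ∂μ := by
  rw [← integral_const_mul, ← integral_const_mul, ← integral_const_mul,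
    ← integral_add (hf.const_mul _) (hg.const_mul _)]
  exact integral_mono_of_nonneg (ae_of_all _ fun w => by positivity)
    ((hf.const_mul _).add (hg.const_mul _)) (ae_of_all _ fun w => mul_norm_add_sq_le hη _ _)

theorem le_of_le_affine_recurrence {a : ℕ → ℝ} {c q B : ℝ} (hq : 0 ≤ q)
    (hfix : c + q * B ≤ B) (h0 : a 0 ≤ B) (hstep : ∀ t, a (t + 1) ≤ c + q * a t) :
    ∀ t, a t ≤ B := by
  intro t
  induction t with
  | zero => exact h0
  | succ t ih => exact (hstep t).trans (le_trans (by gcongr) hfix)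

theorem integral_norm_sq_error_feedback_le {Ω E : Type*} [MeasurableSpace Ω] {μ : Measure Ω}
    [SeminormedAddCommGroup E] {ω C : ℝ} (hω0 : 0 ≤ ω) (hω1 : ω < 1) {z δ zhat : ℕ → Ω → E}
    (hδ0 : δ 0 = 0) (hδrec : ∀ t, δ (t + 1) = fun w => z t w + δ t w - zhat t w)
    (hcomp : ∀ t, ∫ w, ‖zhat t w - (z t w + δ t w)‖ ^ 2 ∂μ ≤ ω * ∫ w, ‖z t w + δ t w‖ ^ 2 ∂μ)
    (hz : ∀ t, ∫ w, ‖z t w‖ ^ 2 ∂μ ≤ C) (hzint : ∀ t, Integrable (fun w => ‖z t w‖ ^ 2) μ)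
    (hδint : ∀ t, Integrable (fun w => ‖δ t w‖ ^ 2) μ) (t : ℕ) :
    ∫ w, ‖δ t w‖ ^ 2 ∂μ ≤ 2 * ω * (1 + ω) * C / (1 - ω) ^ 2 := by
  have h1ω : 0 < 1 - ω := by linarith
  have hC : 0 ≤ C := (integral_nonneg fun _ => by positivity).trans (hz 0)
  set η := 2 * ω / (1 - ω)
  have hη : 0 ≤ η := by positivity
  refine le_of_le_affine_recurrence (a := fun t => ∫ w, ‖δ t w‖ ^ 2 ∂μ)
    (c := ω * (1 + ω) * C / (1 - ω)) (q := (1 + ω) / 2) (by linarith) (le_of_eq ?_) ?_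
    (fun t => ?_) t
  · field_simp
    ring
  · simp [hδ0]
    positivity
  calc ∫ w, ‖δ (t + 1) w‖ ^ 2 ∂μ = ∫ w, ‖zhat t w - (z t w + δ t w)‖ ^ 2 ∂μ := by
        simp_rw [hδrec t, norm_sub_rev]
    _ ≤ ω * ∫ w, ‖z t w + δ t w‖ ^ 2 ∂μ := hcomp t
    _ = (1 - ω) / 2 * (η * ∫ w, ‖z t w + δ t w‖ ^ 2 ∂μ) := by
        simp only [η]; field_simp
    _ ≤ (1 - ω) / 2 *
          (η * (1 + η) * ∫ w, ‖z t w‖ ^ 2 ∂μ + (1 + η) * ∫ w, ‖δ t w‖ ^ 2 ∂μ) := by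
        gcongr; exact mul_integral_norm_add_sq_le hη (hzint t) (hδint t)
    _ ≤ (1 - ω) / 2 * (η * (1 + η) * C + (1 + η) * ∫ w, ‖δ t w‖ ^ 2 ∂μ) := by
        gcongr; exact hz t
    _ = ω * (1 + ω) * C / (1 - ω) + (1 + ω) / 2 * ∫ w, ‖δ t w‖ ^ 2 ∂μ := by
        simp only [η]; field_simp; ring

theorem worker_error_feedback_residual_bound_general
    {Ωs : Type*} [MeasurableSpace Ωs] (μ : Measure Ωs)
    (d n : ℕ)
    (ω C : ℝ) (hω0 : 0 ≤ ω) (hω1 : ω < 1)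
    (z δ zhat : ℕ → Fin n → Ωs → EuclideanSpace ℝ (Fin d))
    (hδ0 : ∀ i, δ 0 i = 0)
    (hδrec : ∀ t i, δ (t + 1) i = fun w => z t i w + δ t i w - zhat t i w)
    (hcomp : ∀ t i,
      ∫ w, ‖zhat t i w - (z t i w + δ t i w)‖ ^ 2 ∂μ ≤
        ω * ∫ w, ‖z t i w + δ t i w‖ ^ 2 ∂μ)
    (hz : ∀ t i, ∫ w, ‖z t i w‖ ^ 2 ∂μ ≤ C)
    (hzint : ∀ t i, Integrable (fun w => ‖z t i w‖ ^ 2) μ)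
    (hδint : ∀ t i, Integrable (fun w => ‖δ t i w‖ ^ 2) μ) :
    ∀ (i : Fin n) (t : ℕ), 1 ≤ t →
      ∫ w, ‖δ t i w‖ ^ 2 ∂μ ≤ 2 * ω * (1 + ω) * C / (1 - ω) ^ 2 :=
  fun i t _ => integral_norm_sq_error_feedback_le (z := fun t => z t i) (δ := fun t => δ t i)
    (zhat := fun t => zhat t i) hω0 hω1 (hδ0 i) (fun t => hδrec t i) (fun t => hcomp t i)
    (fun t => hz t i) (fun t => hzint t i) (fun t => hδint t i) t

/-- **Worker-side error bound in double error-feedback compression.**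
Each worker `i` keeps an error vector `δ t i` with `δ 0 i = 0` and updates
`δ (t+1) i = z t i + δ t i − 𝒞[z t i + δ t i]`, where the compressed vector
`ẑ t i = 𝒞[z t i + δ t i]` satisfies the `ω`-contraction property in
expectation: `E‖ẑ t i − (z t i + δ t i)‖² ≤ ω·E‖z t i + δ t i‖²` (`0 ≤ ω < 1`).
If `E‖z t i‖² ≤ C` for all `i, t` (with `C > 0`), then for every worker `i`
and every `t ≥ 1`, `E‖δ t i‖² ≤ 2ω(1+ω)C/(1−ω)²`. -/
theorem worker_error_feedback_residual_bound
    {Ωs : Type*} [MeasurableSpace Ωs] (μ : Measure Ωs) [IsProbabilityMeasure μ]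
    (d n : ℕ) (hd : 1 ≤ d) (hn : 1 ≤ n)
    (ω C : ℝ) (hω0 : 0 ≤ ω) (hω1 : ω < 1) (hC : 0 < C)
    (z δ zhat : ℕ → Fin n → Ωs → EuclideanSpace ℝ (Fin d))
    (hδ0 : ∀ i, δ 0 i = 0)
    (hδrec : ∀ t i, δ (t + 1) i = fun w => z t i w + δ t i w - zhat t i w)
    (hcomp : ∀ t i,
      ∫ w, ‖zhat t i w - (z t i w + δ t i w)‖ ^ 2 ∂μ ≤
        ω * ∫ w, ‖z t i w + δ t i w‖ ^ 2 ∂μ)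
    (hz : ∀ t i, ∫ w, ‖z t i w‖ ^ 2 ∂μ ≤ C)
    (hzint : ∀ t i, Integrable (fun w => ‖z t i w‖ ^ 2) μ)
    (hδint : ∀ t i, Integrable (fun w => ‖δ t i w‖ ^ 2) μ) :
    ∀ (i : Fin n) (t : ℕ), 1 ≤ t →
      ∫ w, ‖δ t i w‖ ^ 2 ∂μ ≤ 2 * ω * (1 + ω) * C / (1 - ω) ^ 2 :=
  worker_error_feedback_residual_bound_general μ d n ω C hω0 hω1 z δ zhat hδ0 hδrec hcomp hz hzint
    hδint
end

section
/- Under the double error-feedback compression scheme with compressor satisfying E‖𝒞[x] − x‖² ≤ ω‖x‖² (0 ≤ ω < 1) applied to buffers with E‖z_t^{(i)}‖² ≤ C for all i, t, the server-side error satisfies for every t ≥ 1: E‖δ̄_t‖² ≤ 8ω(1+ω)³C/(1−ω)⁴. -/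
/-!
Measure every process in `L²`, `‖f‖₂ = (E‖f‖²)^{1/2}`. The compressor hypothesis says that the
new residual of an error-feedback loop is at most `√ω` times the compressor input, so
`‖δ_{t+1}‖₂ ≤ √ω (‖z_t‖₂ + ‖δ_t‖₂)` and the residual never exceeds the fixed point
`P = √ω √C / (1 - √ω)`. The worker output `ẑ_t = z_t + δ_t - δ_{t+1}` is then bounded by
`K = √C + 2P`, hence so is the average of the outputs, and the same loop at the server gives
`‖δ̄_t‖₂ ≤ √ω K / (1 - √ω) = √ω √C (1 + √ω) / (1 - √ω)²`. Squaring and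
`(1 + √ω)² ≤ 2 (1 + ω)` give the bound.

Only the norms of the processes are known to be measurable, so each triangle inequality in `L²`
is taken through real-valued functions dominating the norms.
-/
open MeasureTheory ENNReal

section L2

variable {Ω V W : Type*} [MeasurableSpace Ω] {μ : Measure Ω}
  [NormedAddCommGroup V] [NormedAddCommGroup W]

theorem AEStronglyMeasurable.norm_of_norm_sq {f : Ω → V}
    (hf : AEStronglyMeasurable (fun w => ‖f w‖ ^ 2) μ) :
    AEStronglyMeasurable (fun w => ‖f w‖) μ := by
  simpa only [Real.sqrt_sq (norm_nonneg _)] using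
    Real.continuous_sqrt.comp_aestronglyMeasurable hf

theorem eLpNorm_two_sq_eq_ofReal_integral {f : Ω → V}
    (hf : Integrable (fun w => ‖f w‖ ^ 2) μ) :
    eLpNorm f 2 μ ^ 2 = ENNReal.ofReal (∫ w, ‖f w‖ ^ 2 ∂μ) := by
  have h := eLpNorm_nnreal_pow_eq_lintegral (μ := μ) (f := f) (p := 2) two_ne_zero
  rw [ofReal_integral_eq_lintegral_ofReal hf (ae_of_all _ fun w => sq_nonneg _)]
  simp only [NNReal.coe_ofNat, ENNReal.rpow_two] at h
  simpa [← ofReal_norm, ENNReal.ofReal_pow (norm_nonneg _)] using h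

theorem eLpNorm_two_le_ofReal_sqrt {f : Ω → V} {r : ℝ}
    (hf : Integrable (fun w => ‖f w‖ ^ 2) μ) (h : ∫ w, ‖f w‖ ^ 2 ∂μ ≤ r) :
    eLpNorm f 2 μ ≤ ENNReal.ofReal √r := by
  have hr : 0 ≤ r := (integral_nonneg fun w => sq_nonneg _).trans h
  rw [← ENNReal.pow_le_pow_left_iff two_ne_zero, eLpNorm_two_sq_eq_ofReal_integral hf,
    ← ENNReal.ofReal_pow (Real.sqrt_nonneg r), Real.sq_sqrt hr]
  exact ofReal_le_ofReal h

theorem integral_norm_sq_le_of_eLpNorm_two_le {f : Ω → V} {B : ℝ} (hB : 0 ≤ B)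
    (h : eLpNorm f 2 μ ≤ ENNReal.ofReal B) :
    ∫ w, ‖f w‖ ^ 2 ∂μ ≤ B ^ 2 := by
  by_cases hf : Integrable (fun w => ‖f w‖ ^ 2) μ
  · rw [← ENNReal.ofReal_le_ofReal_iff (by positivity), ENNReal.ofReal_pow hB,
      ← eLpNorm_two_sq_eq_ofReal_integral hf]
    exact pow_le_pow_left₀ zero_le h 2
  · rw [integral_undef hf]
    positivity

theorem eLpNorm_two_le_sqrt_mul {f : Ω → V} {g : Ω → W} {ω : ℝ} (hω : 0 ≤ ω)
    (hf : Integrable (fun w => ‖f w‖ ^ 2) μ)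
    (h : ∫ w, ‖f w‖ ^ 2 ∂μ ≤ ω * ∫ w, ‖g w‖ ^ 2 ∂μ) :
    eLpNorm f 2 μ ≤ ENNReal.ofReal √ω * eLpNorm g 2 μ := by
  by_cases hg : Integrable (fun w => ‖g w‖ ^ 2) μ
  · rw [← ENNReal.pow_le_pow_left_iff two_ne_zero, mul_pow,
      eLpNorm_two_sq_eq_ofReal_integral hf, eLpNorm_two_sq_eq_ofReal_integral hg,
      ← ENNReal.ofReal_pow (Real.sqrt_nonneg ω), Real.sq_sqrt hω, ← ENNReal.ofReal_mul hω]
    exact ofReal_le_ofReal h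
  · rw [integral_undef hg, mul_zero] at h
    exact (eLpNorm_two_le_ofReal_sqrt hf h).trans (by simp)

end L2

section Minkowski

variable {Ω E F G : Type*} [MeasurableSpace Ω] {μ : Measure Ω} {p : ℝ≥0∞}
  [NormedAddCommGroup E] [NormedAddCommGroup F] [NormedAddCommGroup G]

theorem eLpNorm_le_add_of_norm_le {f : Ω → E} {g : Ω → F} {h : Ω → G} (hp : 1 ≤ p)
    (hg : AEStronglyMeasurable (fun w => ‖g w‖) μ)
    (hh : AEStronglyMeasurable (fun w => ‖h w‖) μ)
    (hfgh : ∀ w, ‖f w‖ ≤ ‖g w‖ + ‖h w‖) :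
    eLpNorm f p μ ≤ eLpNorm g p μ + eLpNorm h p μ :=
  calc eLpNorm f p μ ≤ eLpNorm (fun w => ‖g w‖ + ‖h w‖) p μ := eLpNorm_mono_real hfgh
    _ ≤ eLpNorm (fun w => ‖g w‖) p μ + eLpNorm (fun w => ‖h w‖) p μ :=
        eLpNorm_add_le hg hh hp
    _ = eLpNorm g p μ + eLpNorm h p μ := by rw [eLpNorm_norm, eLpNorm_norm]

theorem eLpNorm_average_le {ι : Type*} [Fintype ι] [NormedSpace ℝ E] {f : ι → Ω → E}
    {K : ℝ≥0∞} (hp : 1 ≤ p) (hf : ∀ i, AEStronglyMeasurable (fun w => ‖f i w‖) μ)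
    (hK : ∀ i, eLpNorm (f i) p μ ≤ K) :
    eLpNorm (fun w => (Fintype.card ι : ℝ)⁻¹ • ∑ i, f i w) p μ ≤ K := by
  set n := Fintype.card ι
  have hsum : eLpNorm (fun w => ∑ i, f i w) p μ ≤ n * K :=
    calc eLpNorm (fun w => ∑ i, f i w) p μ ≤ eLpNorm (fun w => ∑ i, ‖f i w‖) p μ :=
          eLpNorm_mono_real fun w => norm_sum_le _ _
      _ ≤ ∑ i, eLpNorm (fun w => ‖f i w‖) p μ := by
          convert eLpNorm_sum_le (s := Finset.univ) (fun i _ => hf i) hp using 2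
          ext w
          simp only [Finset.sum_apply]
      _ ≤ n * K := by
          simp only [eLpNorm_norm]
          simpa [n] using Finset.sum_le_sum fun i (_ : i ∈ Finset.univ) => hK i
  have hn : ‖(n : ℝ)⁻¹‖ₑ * n ≤ 1 := by
    rw [← Real.enorm_natCast, ← enorm_mul]
    rcases eq_or_ne n 0 with hn | hn <;> simp [hn]
  calc eLpNorm (fun w => (n : ℝ)⁻¹ • ∑ i, f i w) p μ
      = ‖(n : ℝ)⁻¹‖ₑ * eLpNorm (fun w => ∑ i, f i w) p μ :=
        eLpNorm_const_smul _ (fun w => ∑ i, f i w) p μ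
    _ ≤ ‖(n : ℝ)⁻¹‖ₑ * (n * K) := by gcongr
    _ ≤ K := by rw [← mul_assoc]; exact mul_le_of_le_one_left zero_le hn

theorem eLpNorm_average_add_le {ι : Type*} [Fintype ι] [NormedSpace ℝ E] {f : ι → Ω → E}
    {g : Ω → E} {K : ℝ≥0∞} (hp : 1 ≤ p) (hf : ∀ i, AEStronglyMeasurable (fun w => ‖f i w‖) μ)
    (hg : AEStronglyMeasurable (fun w => ‖g w‖) μ) (hK : ∀ i, eLpNorm (f i) p μ ≤ K) :
    eLpNorm (fun w => (Fintype.card ι : ℝ)⁻¹ • ∑ i, f i w + g w) p μ ≤ K + eLpNorm g p μ := by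
  set n := Fintype.card ι
  have hnorm : ∀ w, ‖(n : ℝ)⁻¹ • ∑ i, f i w + g w‖ ≤ ‖(n : ℝ)⁻¹ • ∑ i, ‖f i w‖‖ + ‖g w‖ :=
    fun w => calc ‖(n : ℝ)⁻¹ • ∑ i, f i w + g w‖ ≤ ‖(n : ℝ)⁻¹ • ∑ i, f i w‖ + ‖g w‖ :=
          norm_add_le _ _
      _ ≤ ‖(n : ℝ)⁻¹ • ∑ i, ‖f i w‖‖ + ‖g w‖ := by
          simp only [norm_smul,
            Real.norm_of_nonneg (Finset.sum_nonneg fun i _ => norm_nonneg (f i w))]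
          gcongr
          exact norm_sum_le _ _
  refine (eLpNorm_le_add_of_norm_le hp ?_ hg hnorm).trans (add_le_add_left ?_ _)
  · exact ((Finset.aestronglyMeasurable_fun_sum _ fun i _ => hf i).const_smul ((n : ℝ)⁻¹)).norm
  · exact eLpNorm_average_le hp (fun i => (hf i).norm) fun i =>
      (eLpNorm_norm (f i)).trans_le (hK i)

end Minkowski

theorem ENNReal.le_ofReal_div_one_sub_of_le_mul_add {a : ℕ → ℝ≥0∞} {σ b : ℝ}
    (hσ0 : 0 ≤ σ) (hσ1 : σ < 1) (hb : 0 ≤ b) (h0 : a 0 = 0)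
    (hstep : ∀ t, a (t + 1) ≤ ENNReal.ofReal σ * (ENNReal.ofReal b + a t)) (t : ℕ) :
    a t ≤ ENNReal.ofReal (σ * b / (1 - σ)) := by
  have hB : 0 ≤ σ * b / (1 - σ) := div_nonneg (by positivity) (by linarith)
  induction t with
  | zero => simp [h0]
  | succ t ih =>
    calc a (t + 1) ≤ ENNReal.ofReal σ * (ENNReal.ofReal b + a t) := hstep t
      _ ≤ ENNReal.ofReal σ * (ENNReal.ofReal b + ENNReal.ofReal (σ * b / (1 - σ))) := by
          gcongr
      _ = ENNReal.ofReal (σ * (b + σ * b / (1 - σ))) := by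
          rw [← ENNReal.ofReal_add hb hB, ← ENNReal.ofReal_mul hσ0]
      _ = ENNReal.ofReal (σ * b / (1 - σ)) := by
          congr 1
          field_simp [(by linarith : (1 - σ) ≠ 0)]
          ring

section ErrorFeedback

variable {Ω V : Type*} [MeasurableSpace Ω] {μ : Measure Ω} [NormedAddCommGroup V]

theorem eLpNorm_errorFeedback_residual_le {x e c : ℕ → Ω → V} {ω b : ℝ}
    (hω0 : 0 ≤ ω) (hω1 : ω < 1) (hb : 0 ≤ b) (he0 : e 0 = 0)
    (hrec : ∀ t, e (t + 1) = fun w => x t w + e t w - c t w)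
    (hcomp : ∀ t, ∫ w, ‖c t w - (x t w + e t w)‖ ^ 2 ∂μ ≤
      ω * ∫ w, ‖x t w + e t w‖ ^ 2 ∂μ)
    (hint : ∀ t, Integrable (fun w => ‖e t w‖ ^ 2) μ)
    (hinput : ∀ t, eLpNorm (fun w => x t w + e t w) 2 μ ≤
      ENNReal.ofReal b + eLpNorm (e t) 2 μ) (t : ℕ) :
    eLpNorm (e t) 2 μ ≤ ENNReal.ofReal (√ω * b / (1 - √ω)) := by
  have hσ1 : √ω < 1 := by rwa [Real.sqrt_lt' one_pos, one_pow]
  refine ENNReal.le_ofReal_div_one_sub_of_le_mul_add (a := fun t => eLpNorm (e t) 2 μ)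
    (Real.sqrt_nonneg ω) hσ1 hb (by simp [he0]) (fun t => ?_) t
  have hnorm : ∀ w, ‖e (t + 1) w‖ = ‖c t w - (x t w + e t w)‖ := fun w => by
    rw [hrec, norm_sub_rev]
  calc eLpNorm (e (t + 1)) 2 μ = eLpNorm (fun w => c t w - (x t w + e t w)) 2 μ :=
        eLpNorm_congr_norm_ae (ae_of_all _ hnorm)
    _ ≤ ENNReal.ofReal √ω * eLpNorm (fun w => x t w + e t w) 2 μ :=
        eLpNorm_two_le_sqrt_mul hω0 (by simpa only [hnorm] using hint (t + 1)) (hcomp t)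
    _ ≤ ENNReal.ofReal √ω * (ENNReal.ofReal b + eLpNorm (e t) 2 μ) := by
        gcongr
        exact hinput t

theorem eLpNorm_errorFeedback_output_le {p : ℝ≥0∞} {x e c : ℕ → Ω → V} (hp : 1 ≤ p)
    (hrec : ∀ t, e (t + 1) = fun w => x t w + e t w - c t w) (t : ℕ)
    (hx : AEStronglyMeasurable (fun w => ‖x t w‖) μ)
    (he : AEStronglyMeasurable (fun w => ‖e t w‖) μ)
    (he' : AEStronglyMeasurable (fun w => ‖e (t + 1) w‖) μ) :
    eLpNorm (c t) p μ ≤ eLpNorm (x t) p μ + eLpNorm (e t) p μ + eLpNorm (e (t + 1)) p μ := by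
  have hc : ∀ w, c t w = x t w + e t w - e (t + 1) w := fun w => by simp [hrec]
  calc eLpNorm (c t) p μ
      ≤ eLpNorm (fun w => ‖x t w‖ + ‖e t w‖) p μ + eLpNorm (e (t + 1)) p μ := by
        refine eLpNorm_le_add_of_norm_le hp (hx.add he).norm he' fun w => ?_
        rw [hc, Real.norm_of_nonneg (by positivity)]
        exact (norm_sub_le _ _).trans (by gcongr; exact norm_add_le _ _)
    _ ≤ eLpNorm (x t) p μ + eLpNorm (e t) p μ + eLpNorm (e (t + 1)) p μ := by
        gcongr
        exact eLpNorm_le_add_of_norm_le hp hx he fun w =>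
          (Real.norm_of_nonneg (by positivity)).le

end ErrorFeedback

theorem errorFeedback_bound_sq_le {σ c : ℝ} (hσ0 : 0 ≤ σ) (hσ1 : σ < 1) :
    (σ * (c + 2 * (σ * c / (1 - σ))) / (1 - σ)) ^ 2 ≤
      8 * σ ^ 2 * (1 + σ ^ 2) ^ 3 * c ^ 2 / (1 - σ ^ 2) ^ 4 := by
  have h1σ : 0 < 1 - σ := by linarith
  have hB : σ * (c + 2 * (σ * c / (1 - σ))) / (1 - σ) = σ * c * (1 + σ) / ((1 - σ) ^ 2) := by
    field_simp
    ring
  have hkey : (1 + σ) ^ 6 ≤ 8 * (1 + σ ^ 2) ^ 3 :=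
    calc (1 + σ) ^ 6 = ((1 + σ) ^ 2) ^ 3 := by ring
      _ ≤ (2 * (1 + σ ^ 2)) ^ 3 := by gcongr; nlinarith [sq_nonneg (1 - σ)]
      _ = 8 * (1 + σ ^ 2) ^ 3 := by ring
  rw [hB, div_pow, div_le_div_iff₀ (by positivity) (pow_pos (by nlinarith) 4)]
  calc (σ * c * (1 + σ)) ^ 2 * (1 - σ ^ 2) ^ 4
      = σ ^ 2 * c ^ 2 * (1 - σ) ^ 4 * (1 + σ) ^ 6 := by ring
    _ ≤ σ ^ 2 * c ^ 2 * (1 - σ) ^ 4 * (8 * (1 + σ ^ 2) ^ 3) := by gcongr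
    _ = 8 * σ ^ 2 * (1 + σ ^ 2) ^ 3 * c ^ 2 * ((1 - σ) ^ 2) ^ 2 := by ring

theorem server_error_feedback_residual_bound_general
    {Ωs : Type*} [MeasurableSpace Ωs] (μ : Measure Ωs)
    (d n : ℕ)
    (ω C : ℝ) (hω0 : 0 ≤ ω) (hω1 : ω < 1) (hC : 0 < C)
    (z δ zhat : ℕ → Fin n → Ωs → EuclideanSpace ℝ (Fin d))
    (δbar cbar : ℕ → Ωs → EuclideanSpace ℝ (Fin d))
    (hδ0 : ∀ i, δ 0 i = 0)
    (hδrec : ∀ t i, δ (t + 1) i = fun w => z t i w + δ t i w - zhat t i w)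
    (hcomp : ∀ t i,
      ∫ w, ‖zhat t i w - (z t i w + δ t i w)‖ ^ 2 ∂μ ≤
        ω * ∫ w, ‖z t i w + δ t i w‖ ^ 2 ∂μ)
    (hδbar0 : δbar 0 = 0)
    (hδbarrec : ∀ t, δbar (t + 1) =
      fun w => ((n : ℝ)⁻¹ • ∑ i, zhat t i w) + δbar t w - cbar t w)
    (hcompbar : ∀ t,
      ∫ w, ‖cbar t w - (((n : ℝ)⁻¹ • ∑ i, zhat t i w) + δbar t w)‖ ^ 2 ∂μ ≤
        ω * ∫ w, ‖((n : ℝ)⁻¹ • ∑ i, zhat t i w) + δbar t w‖ ^ 2 ∂μ)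
    (hz : ∀ t i, ∫ w, ‖z t i w‖ ^ 2 ∂μ ≤ C)
    (hzint : ∀ t i, Integrable (fun w => ‖z t i w‖ ^ 2) μ)
    (hδint : ∀ t i, Integrable (fun w => ‖δ t i w‖ ^ 2) μ)
    (hzhatint : ∀ t i, Integrable (fun w => ‖zhat t i w‖ ^ 2) μ)
    (hδbarint : ∀ t, Integrable (fun w => ‖δbar t w‖ ^ 2) μ) :
    ∀ t : ℕ, 1 ≤ t →
      ∫ w, ‖δbar t w‖ ^ 2 ∂μ ≤ 8 * ω * (1 + ω) ^ 3 * C / (1 - ω) ^ 4 := by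
  intro t _
  set P := √ω * √C / (1 - √ω)
  have hσ1 : √ω < 1 := by rwa [Real.sqrt_lt' one_pos, one_pow]
  have hP : 0 ≤ P := div_nonneg (by positivity) (by linarith)
  have hzm t i := AEStronglyMeasurable.norm_of_norm_sq (hzint t i).1
  have hδm t i := AEStronglyMeasurable.norm_of_norm_sq (hδint t i).1
  have hz2 t i : eLpNorm (z t i) 2 μ ≤ ENNReal.ofReal √C :=
    eLpNorm_two_le_ofReal_sqrt (hzint t i) (hz t i)
  have hδ2 t i : eLpNorm (δ t i) 2 μ ≤ ENNReal.ofReal P :=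
    eLpNorm_errorFeedback_residual_le hω0 hω1 (Real.sqrt_nonneg C) (hδ0 i) (hδrec · i)
      (hcomp · i) (hδint · i) (fun t => (eLpNorm_le_add_of_norm_le one_le_two (hzm t i)
        (hδm t i) fun w => norm_add_le _ _).trans (by gcongr; exact hz2 t i)) t
  have hzhat2 t i : eLpNorm (zhat t i) 2 μ ≤ ENNReal.ofReal (√C + 2 * P) := by
    refine (eLpNorm_errorFeedback_output_le (x := (z · i)) (e := (δ · i))
      (c := (zhat · i)) one_le_two (hδrec · i) t (hzm t i) (hδm t i)
      (hδm (t + 1) i)).trans ?_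
    rw [two_mul, ← add_assoc, ENNReal.ofReal_add (by positivity) hP,
      ENNReal.ofReal_add (by positivity) hP]
    exact add_le_add (add_le_add (hz2 t i) (hδ2 t i)) (hδ2 (t + 1) i)
  have hδbar2 := eLpNorm_errorFeedback_residual_le (b := √C + 2 * P) hω0 hω1
    (by positivity) hδbar0 hδbarrec hcompbar hδbarint (fun t => by
      simpa only [Fintype.card_fin] using eLpNorm_average_add_le one_le_two
        (fun i => AEStronglyMeasurable.norm_of_norm_sq (hzhatint t i).1)
        (AEStronglyMeasurable.norm_of_norm_sq (hδbarint t).1) (hzhat2 t)) t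
  refine (integral_norm_sq_le_of_eLpNorm_two_le (by positivity) hδbar2).trans ?_
  simpa only [Real.sq_sqrt hω0, Real.sq_sqrt hC.le] using
    errorFeedback_bound_sq_le (c := √C) (Real.sqrt_nonneg ω) hσ1

/-- **Server-side error bound in double error-feedback compression.**
Workers keep `δ t i` with `δ 0 i = 0`, `δ (t+1) i = z t i + δ t i − ẑ t i`
where `ẑ t i = 𝒞[z t i + δ t i]`; the server keeps `δ̄ t` with `δ̄ 0 = 0` and
`δ̄ (t+1) = (1/n)Σ_i ẑ t i + δ̄ t − 𝒞[(1/n)Σ_i ẑ t i + δ̄ t]` (server compressor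
output `c̄ t`).  The compressor satisfies the `ω`-contraction property in
expectation (`0 ≤ ω < 1`) and `E‖z t i‖² ≤ C` for all `i, t`.  Then for every
`t ≥ 1`, `E‖δ̄ t‖² ≤ 8ω(1+ω)³C/(1−ω)⁴`. -/
theorem server_error_feedback_residual_bound
    {Ωs : Type*} [MeasurableSpace Ωs] (μ : Measure Ωs) [IsProbabilityMeasure μ]
    (d n : ℕ) (hd : 1 ≤ d) (hn : 1 ≤ n)
    (ω C : ℝ) (hω0 : 0 ≤ ω) (hω1 : ω < 1) (hC : 0 < C)
    (z δ zhat : ℕ → Fin n → Ωs → EuclideanSpace ℝ (Fin d))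
    (δbar cbar : ℕ → Ωs → EuclideanSpace ℝ (Fin d))
    (hδ0 : ∀ i, δ 0 i = 0)
    (hδrec : ∀ t i, δ (t + 1) i = fun w => z t i w + δ t i w - zhat t i w)
    (hcomp : ∀ t i,
      ∫ w, ‖zhat t i w - (z t i w + δ t i w)‖ ^ 2 ∂μ ≤
        ω * ∫ w, ‖z t i w + δ t i w‖ ^ 2 ∂μ)
    (hδbar0 : δbar 0 = 0)
    (hδbarrec : ∀ t, δbar (t + 1) =
      fun w => ((n : ℝ)⁻¹ • ∑ i, zhat t i w) + δbar t w - cbar t w)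
    (hcompbar : ∀ t,
      ∫ w, ‖cbar t w - (((n : ℝ)⁻¹ • ∑ i, zhat t i w) + δbar t w)‖ ^ 2 ∂μ ≤
        ω * ∫ w, ‖((n : ℝ)⁻¹ • ∑ i, zhat t i w) + δbar t w‖ ^ 2 ∂μ)
    (hz : ∀ t i, ∫ w, ‖z t i w‖ ^ 2 ∂μ ≤ C)
    (hzint : ∀ t i, Integrable (fun w => ‖z t i w‖ ^ 2) μ)
    (hδint : ∀ t i, Integrable (fun w => ‖δ t i w‖ ^ 2) μ)
    (hzhatint : ∀ t i, Integrable (fun w => ‖zhat t i w‖ ^ 2) μ)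
    (hδbarint : ∀ t, Integrable (fun w => ‖δbar t w‖ ^ 2) μ) :
    ∀ t : ℕ, 1 ≤ t →
      ∫ w, ‖δbar t w‖ ^ 2 ∂μ ≤ 8 * ω * (1 + ω) ^ 3 * C / (1 - ω) ^ 4 :=
  server_error_feedback_residual_bound_general μ d n ω C hω0 hω1 hC z δ zhat δbar cbar hδ0 hδrec
    hcomp hδbar0 hδbarrec hcompbar hz hzint hδint hzhatint hδbarint
end

section
/- Under the double error-feedback compression scheme with compressor satisfying E‖𝒞[x] − x‖² ≤ ω‖x‖² (0 ≤ ω < 1) applied to buffers with E‖z_t^{(i)}‖² ≤ C for all i, t, the compressed inputs satisfy for every i and t ≥ 1: E‖ẑ_t^{(i)}‖² ≤ 4(1+ω)²C/(1−ω)², where ẑ_t^{(i)} = 𝒞[z_t^{(i)} + δ_t^{(i)}] = z_t^{(i)} + δ_t^{(i)} − δ_{t+1}^{(i)}. -/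
open MeasureTheory

/-- Weighted Young inequality specialised to our weights. -/
lemma young_weighted (ω x y : ℝ) (hx : 0 ≤ x) (hy : 0 ≤ y)
    (hω0 : 0 ≤ ω) (hω1 : ω < 1) :
    (x + y) ^ 2 ≤ 2 / (1 - ω) * x ^ 2 + 2 / (1 + ω) * y ^ 2 := by
  have h1 : (0:ℝ) < 1 - ω := by linarith
  have h2 : (0:ℝ) < 1 + ω := by linarith
  rw [div_mul_eq_mul_div, div_mul_eq_mul_div, div_add_div _ _ h1.ne' h2.ne',
    le_div_iff₀ (by positivity)]
  nlinarith [sq_nonneg ((1 + ω) * x - (1 - ω) * y)]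

/-- **Bound on compressed buffers in double error-feedback compression.**
Each worker `i` keeps an error vector `δ t i` with `δ 0 i = 0` and
`δ (t+1) i = z t i + δ t i − ẑ t i`, where `ẑ t i = 𝒞[z t i + δ t i]`
satisfies the `ω`-contraction property in expectation (`0 ≤ ω < 1`).
If `E‖z t i‖² ≤ C` for all `i, t`, then for every `i` and `t ≥ 1`,
`E‖ẑ t i‖² ≤ 4(1+ω)²C/(1−ω)²`. -/
theorem compressed_buffer_bound
    {Ωs : Type*} [MeasurableSpace Ωs] (μ : Measure Ωs) [IsProbabilityMeasure μ]
    (d n : ℕ) (hd : 1 ≤ d) (hn : 1 ≤ n)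
    (ω C : ℝ) (hω0 : 0 ≤ ω) (hω1 : ω < 1) (hC : 0 < C)
    (z δ zhat : ℕ → Fin n → Ωs → EuclideanSpace ℝ (Fin d))
    (hδ0 : ∀ i, δ 0 i = 0)
    (hδrec : ∀ t i, δ (t + 1) i = fun w => z t i w + δ t i w - zhat t i w)
    (hcomp : ∀ t i,
      ∫ w, ‖zhat t i w - (z t i w + δ t i w)‖ ^ 2 ∂μ ≤
        ω * ∫ w, ‖z t i w + δ t i w‖ ^ 2 ∂μ)
    (hz : ∀ t i, ∫ w, ‖z t i w‖ ^ 2 ∂μ ≤ C)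
    (hzint : ∀ t i, Integrable (fun w => ‖z t i w‖ ^ 2) μ)
    (hδint : ∀ t i, Integrable (fun w => ‖δ t i w‖ ^ 2) μ) :
    ∀ (i : Fin n) (t : ℕ), 1 ≤ t →
      ∫ w, ‖zhat t i w‖ ^ 2 ∂μ ≤ 4 * (1 + ω) ^ 2 * C / (1 - ω) ^ 2 := by
  intro i t _ht
  have h1 : (0:ℝ) < 1 - ω := by linarith
  have h2 : (0:ℝ) < 1 + ω := by linarith
  -- δ_{t+1} error integral equals the compression error integral
  have hD1 : ∀ s : ℕ, ∫ w, ‖δ (s + 1) i w‖ ^ 2 ∂μ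
      = ∫ w, ‖zhat s i w - (z s i w + δ s i w)‖ ^ 2 ∂μ := by
    intro s
    congr 1
    funext w
    rw [hδrec s i]
    rw [norm_sub_rev]
  -- bound on the buffer-plus-error integral
  have hSbound : ∀ s : ℕ,
      ∫ w, ‖z s i w + δ s i w‖ ^ 2 ∂μ
        ≤ 2 / (1 - ω) * C + 2 / (1 + ω) * ∫ w, ‖δ s i w‖ ^ 2 ∂μ := by
    intro s
    have hgi : Integrable
        (fun w => 2 / (1 - ω) * ‖z s i w‖ ^ 2 + 2 / (1 + ω) * ‖δ s i w‖ ^ 2) μ :=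
      ((hzint s i).const_mul _).add ((hδint s i).const_mul _)
    have hmono : ∫ w, ‖z s i w + δ s i w‖ ^ 2 ∂μ
        ≤ ∫ w, (2 / (1 - ω) * ‖z s i w‖ ^ 2 + 2 / (1 + ω) * ‖δ s i w‖ ^ 2) ∂μ := by
      refine integral_mono_of_nonneg (Filter.Eventually.of_forall fun w => by positivity)
        hgi (Filter.Eventually.of_forall fun w => ?_)
      calc ‖z s i w + δ s i w‖ ^ 2 ≤ (‖z s i w‖ + ‖δ s i w‖) ^ 2 := by
            exact pow_le_pow_left₀ (norm_nonneg _) (norm_add_le _ _) 2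
        _ ≤ _ := young_weighted ω _ _ (norm_nonneg _) (norm_nonneg _) hω0 hω1
    rw [integral_add ((hzint s i).const_mul _) ((hδint s i).const_mul _),
      integral_const_mul, integral_const_mul] at hmono
    have hzC := hz s i
    have : 2 / (1 - ω) * ∫ w, ‖z s i w‖ ^ 2 ∂μ ≤ 2 / (1 - ω) * C :=
      mul_le_mul_of_nonneg_left hzC (by positivity)
    linarith
  -- uniform bound on the error moments
  have hDstar : ∀ s : ℕ, ∫ w, ‖δ s i w‖ ^ 2 ∂μ ≤ 2 * ω * (1 + ω) * C / (1 - ω) ^ 2 := by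
    intro s
    induction s with
    | zero =>
        simp only [hδ0 i]
        simp only [Pi.zero_apply, norm_zero]
        rw [show ((0:ℝ) ^ 2) = 0 by ring, integral_zero]
        apply div_nonneg _ (by positivity)
        nlinarith [mul_nonneg (mul_nonneg hω0 h2.le) hC.le]
    | succ s ih =>
        rw [hD1 s]
        have h3 := hcomp s i
        have h4 : ω * ∫ w, ‖z s i w + δ s i w‖ ^ 2 ∂μ
            ≤ ω * (2 / (1 - ω) * C + 2 / (1 + ω) * ∫ w, ‖δ s i w‖ ^ 2 ∂μ) :=
          mul_le_mul_of_nonneg_left (hSbound s) hω0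
        have h5 : ω * (2 / (1 - ω) * C + 2 / (1 + ω) * ∫ w, ‖δ s i w‖ ^ 2 ∂μ)
            ≤ 2 * ω * (1 + ω) * C / (1 - ω) ^ 2 := by
          have hcoef : 0 ≤ ω * (2 / (1 + ω)) := by positivity
          have h6 : ω * (2 / (1 + ω)) * ∫ w, ‖δ s i w‖ ^ 2 ∂μ
              ≤ ω * (2 / (1 + ω)) * (2 * ω * (1 + ω) * C / (1 - ω) ^ 2) :=
            mul_le_mul_of_nonneg_left ih hcoef
          have key : ω * (2 / (1 - ω) * C) + ω * (2 / (1 + ω)) * (2 * ω * (1 + ω) * C / (1 - ω) ^ 2)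
              = 2 * ω * (1 + ω) * C / (1 - ω) ^ 2 := by
            field_simp
            ring
          nlinarith [h6]
        linarith
  -- final bound
  by_cases hS : Integrable (fun w => ‖z t i w + δ t i w‖ ^ 2) μ
  · -- main case
    have hgi : Integrable (fun w => 2 * ‖z t i w + δ t i w‖ ^ 2 + 2 * ‖δ (t + 1) i w‖ ^ 2) μ :=
      (hS.const_mul _).add ((hδint (t + 1) i).const_mul _)
    have hmono : ∫ w, ‖zhat t i w‖ ^ 2 ∂μ
        ≤ ∫ w, (2 * ‖z t i w + δ t i w‖ ^ 2 + 2 * ‖δ (t + 1) i w‖ ^ 2) ∂μ := by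
      refine integral_mono_of_nonneg (Filter.Eventually.of_forall fun w => by positivity)
        hgi (Filter.Eventually.of_forall fun w => ?_)
      have hw : zhat t i w = (z t i w + δ t i w) - δ (t + 1) i w := by
        simp only [hδrec t i]; abel
      dsimp only
      rw [hw]
      have h7 : ‖z t i w + δ t i w - δ (t + 1) i w‖ ^ 2
          ≤ (‖z t i w + δ t i w‖ + ‖δ (t + 1) i w‖) ^ 2 :=
        pow_le_pow_left₀ (norm_nonneg _) (norm_sub_le _ _) 2
      nlinarith [sq_nonneg (‖z t i w + δ t i w‖ - ‖δ (t + 1) i w‖)]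
    rw [integral_add (hS.const_mul _) ((hδint (t + 1) i).const_mul _),
      integral_const_mul, integral_const_mul] at hmono
    set S := ∫ w, ‖z t i w + δ t i w‖ ^ 2 ∂μ with hSdef
    have hDle : ∫ w, ‖δ (t + 1) i w‖ ^ 2 ∂μ ≤ ω * S := by
      rw [hD1 t]; exact hcomp t i
    have hSle : S ≤ 2 * (1 + ω) * C / (1 - ω) ^ 2 := by
      have := hSbound t
      have hd := hDstar t
      have h8 : 2 / (1 + ω) * ∫ w, ‖δ t i w‖ ^ 2 ∂μ
          ≤ 2 / (1 + ω) * (2 * ω * (1 + ω) * C / (1 - ω) ^ 2) :=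
        mul_le_mul_of_nonneg_left hd (by positivity)
      have key : 2 / (1 - ω) * C + 2 / (1 + ω) * (2 * ω * (1 + ω) * C / (1 - ω) ^ 2)
          = 2 * (1 + ω) * C / (1 - ω) ^ 2 := by
        field_simp
        ring
      linarith
    have hSnn : 0 ≤ S := integral_nonneg fun w => sq_nonneg _
    have hfin : 2 * S + 2 * (ω * S) ≤ 4 * (1 + ω) ^ 2 * C / (1 - ω) ^ 2 := by
      have h9 : 2 * (1 + ω) * S ≤ 2 * (1 + ω) * (2 * (1 + ω) * C / (1 - ω) ^ 2) :=
        mul_le_mul_of_nonneg_left hSle (by positivity)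
      have key : 2 * (1 + ω) * (2 * (1 + ω) * C / (1 - ω) ^ 2)
          = 4 * (1 + ω) ^ 2 * C / (1 - ω) ^ 2 := by
        field_simp
        ring
      nlinarith
    linarith
  · -- degenerate case: the buffer-plus-error second moment is not integrable
    by_cases hZ : Integrable (fun w => ‖zhat t i w‖ ^ 2) μ
    · exfalso
      have hS0 : ∫ w, ‖z t i w + δ t i w‖ ^ 2 ∂μ = 0 := integral_undef hS
      have hDle : ∫ w, ‖δ (t + 1) i w‖ ^ 2 ∂μ ≤ 0 := by
        rw [hD1 t]
        calc ∫ w, ‖zhat t i w - (z t i w + δ t i w)‖ ^ 2 ∂μ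
            ≤ ω * ∫ w, ‖z t i w + δ t i w‖ ^ 2 ∂μ := hcomp t i
          _ = 0 := by rw [hS0]; ring
      have hDeq : ∫ w, ‖δ (t + 1) i w‖ ^ 2 ∂μ = 0 :=
        le_antisymm hDle (integral_nonneg fun w => sq_nonneg _)
      have hae : (fun w => ‖δ (t + 1) i w‖ ^ 2) =ᵐ[μ] 0 :=
        (integral_eq_zero_iff_of_nonneg (fun w => sq_nonneg _) (hδint (t + 1) i)).mp hDeq
      have hcongr : (fun w => ‖zhat t i w‖ ^ 2) =ᵐ[μ]
          (fun w => ‖z t i w + δ t i w‖ ^ 2) := by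
        filter_upwards [hae] with w hw
        have hδz : δ (t + 1) i w = 0 := by
          have : ‖δ (t + 1) i w‖ = 0 := by
            have := hw
            simp only [Pi.zero_apply] at this
            nlinarith [norm_nonneg (δ (t + 1) i w)]
          simpa using this
        have hw2 : zhat t i w = z t i w + δ t i w := by
          have := hδrec t i
          have h10 : δ (t + 1) i w = z t i w + δ t i w - zhat t i w := by rw [this]
          rw [hδz] at h10
          have := h10.symm
          rw [sub_eq_zero] at this
          exact this.symm
        rw [hw2]
      exact hS (hZ.congr hcongr)
    · rw [integral_undef hZ]
      apply div_nonneg _ (by positivity)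
      nlinarith
end

section
/- Under the double error-feedback compression scheme with compressor satisfying E‖𝒞[x] − x‖² ≤ ω‖x‖² (0 ≤ ω < 1) applied to buffers with E‖z_t^{(i)}‖² ≤ C for all i, t, the aggregated error δ_t := (1/n)Σ_{i=1}^n δ_t^{(i)} − δ̄_t satisfies for all t ≥ 0: E‖δ_t‖² ≤ 32ω(1+ω)³C/(1−ω)⁴. -/
open MeasureTheory

private lemma pw_amgm {E : Type*} [NormedAddCommGroup E] {ω : ℝ} (hω0 : 0 ≤ ω) (hω1 : ω < 1)
    (a b : E) :
    ω * ‖a + b‖ ^ 2 ≤ (1 + ω) / 2 * ‖b‖ ^ 2 + ω * (1 + ω) / (1 - ω) * ‖a‖ ^ 2 := by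
  have h2 : (0:ℝ) < 1 - ω := by linarith
  have h1 : ‖a + b‖ ≤ ‖a‖ + ‖b‖ := norm_add_le a b
  have ha := norm_nonneg a
  have hb := norm_nonneg b
  have hab := norm_nonneg (a + b)
  have hsq : ‖a + b‖ ^ 2 ≤ (‖a‖ + ‖b‖) ^ 2 := by
    apply pow_le_pow_left₀ hab h1
  have key : 2 * (1 - ω) * (ω * ‖a + b‖ ^ 2) ≤
      2 * (1 - ω) * ((1 + ω) / 2 * ‖b‖ ^ 2 + ω * (1 + ω) / (1 - ω) * ‖a‖ ^ 2) := by
    have expand : 2 * (1 - ω) * ((1 + ω) / 2 * ‖b‖ ^ 2 + ω * (1 + ω) / (1 - ω) * ‖a‖ ^ 2)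
        = (1 - ω) * (1 + ω) * ‖b‖ ^ 2 + 2 * ω * (1 + ω) * ‖a‖ ^ 2 := by
      field_simp
    rw [expand]
    nlinarith [sq_nonneg ((1 - ω) * ‖b‖ - 2 * ω * ‖a‖), mul_nonneg hω0 h2.le,
      mul_nonneg (mul_nonneg hω0 h2.le) (sq_nonneg (‖a‖ + ‖b‖)), hsq]
  exact le_of_mul_le_mul_left key (by linarith)

private lemma pw3 {E : Type*} [NormedAddCommGroup E] (a b c : E) :
    ‖a + b - c‖ ^ 2 ≤ 3 * ‖a‖ ^ 2 + 3 * ‖b‖ ^ 2 + 3 * ‖c‖ ^ 2 := by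
  have h1 : ‖a + b - c‖ ≤ ‖a‖ + ‖b‖ + ‖c‖ := by
    calc ‖a + b - c‖ ≤ ‖a + b‖ + ‖c‖ := norm_sub_le _ _
      _ ≤ ‖a‖ + ‖b‖ + ‖c‖ := by linarith [norm_add_le a b]
  have hsq : ‖a + b - c‖ ^ 2 ≤ (‖a‖ + ‖b‖ + ‖c‖) ^ 2 :=
    pow_le_pow_left₀ (norm_nonneg _) h1 2
  nlinarith [sq_nonneg (‖a‖ - ‖b‖), sq_nonneg (‖a‖ - ‖c‖), sq_nonneg (‖b‖ - ‖c‖)]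

private lemma pw2 {E : Type*} [NormedAddCommGroup E] (a b : E) :
    ‖a - b‖ ^ 2 ≤ 2 * ‖a‖ ^ 2 + 2 * ‖b‖ ^ 2 := by
  have h1 : ‖a - b‖ ≤ ‖a‖ + ‖b‖ := norm_sub_le _ _
  have hsq : ‖a - b‖ ^ 2 ≤ (‖a‖ + ‖b‖) ^ 2 :=
    pow_le_pow_left₀ (norm_nonneg _) h1 2
  nlinarith [sq_nonneg (‖a‖ - ‖b‖)]

private lemma pw_avg {E : Type*} [NormedAddCommGroup E] [NormedSpace ℝ E] {n : ℕ} (hn : 1 ≤ n)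
    (v : Fin n → E) :
    ‖(n : ℝ)⁻¹ • ∑ i, v i‖ ^ 2 ≤ (n : ℝ)⁻¹ * ∑ i, ‖v i‖ ^ 2 := by
  have hn0 : (0:ℝ) < n := by exact_mod_cast hn
  have h1 : ‖∑ i, v i‖ ≤ ∑ i, ‖v i‖ := norm_sum_le _ _
  have h2 : (∑ i, ‖v i‖) ^ 2 ≤ (n : ℝ) * ∑ i, ‖v i‖ ^ 2 := by
    have := sq_sum_le_card_mul_sum_sq (s := (Finset.univ : Finset (Fin n)))
      (f := fun i => ‖v i‖)
    simpa using this
  have h3 : ‖∑ i, v i‖ ^ 2 ≤ (n : ℝ) * ∑ i, ‖v i‖ ^ 2 :=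
    le_trans (pow_le_pow_left₀ (norm_nonneg _) h1 2) h2
  rw [norm_smul, mul_pow]
  have h4 : ‖(n : ℝ)⁻¹‖ ^ 2 = ((n:ℝ)⁻¹) ^ 2 := by
    rw [Real.norm_eq_abs, abs_of_nonneg (by positivity)]
  rw [h4]
  calc ((n:ℝ)⁻¹) ^ 2 * ‖∑ i, v i‖ ^ 2 ≤ ((n:ℝ)⁻¹) ^ 2 * ((n : ℝ) * ∑ i, ‖v i‖ ^ 2) := by
        apply mul_le_mul_of_nonneg_left h3 (by positivity)
    _ = (n : ℝ)⁻¹ * ∑ i, ‖v i‖ ^ 2 := by field_simp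

set_option maxHeartbeats 1600000 in

/-- **Aggregated error bound in double error-feedback compression
(Lemma `delta_bound`).**  Workers keep `δ t i` with `δ 0 i = 0`,
`δ (t+1) i = z t i + δ t i − ẑ t i` where `ẑ t i = 𝒞[z t i + δ t i]`;
the server keeps `δ̄ t` with `δ̄ 0 = 0` and
`δ̄ (t+1) = (1/n)Σ_i ẑ t i + δ̄ t − 𝒞[(1/n)Σ_i ẑ t i + δ̄ t]`.  The compressor
satisfies the `ω`-contraction property in expectation (`0 ≤ ω < 1`) and
`E‖z t i‖² ≤ C` for all `i, t`.  Then the aggregated error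
`δ_t := (1/n)Σ_i δ t i − δ̄ t` satisfies, for all `t ≥ 0`,
`E‖δ_t‖² ≤ 32ω(1+ω)³C/(1−ω)⁴`. -/
theorem aggregated_error_feedback_residual_bound
    {Ωs : Type*} [MeasurableSpace Ωs] (μ : Measure Ωs) [IsProbabilityMeasure μ]
    (d n : ℕ) (hd : 1 ≤ d) (hn : 1 ≤ n)
    (ω C : ℝ) (hω0 : 0 ≤ ω) (hω1 : ω < 1) (hC : 0 < C)
    (z δ zhat : ℕ → Fin n → Ωs → EuclideanSpace ℝ (Fin d))
    (δbar cbar : ℕ → Ωs → EuclideanSpace ℝ (Fin d))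
    (hδ0 : ∀ i, δ 0 i = 0)
    (hδrec : ∀ t i, δ (t + 1) i = fun w => z t i w + δ t i w - zhat t i w)
    (hcomp : ∀ t i,
      ∫ w, ‖zhat t i w - (z t i w + δ t i w)‖ ^ 2 ∂μ ≤
        ω * ∫ w, ‖z t i w + δ t i w‖ ^ 2 ∂μ)
    (hδbar0 : δbar 0 = 0)
    (hδbarrec : ∀ t, δbar (t + 1) =
      fun w => ((n : ℝ)⁻¹ • ∑ i, zhat t i w) + δbar t w - cbar t w)
    (hcompbar : ∀ t,
      ∫ w, ‖cbar t w - (((n : ℝ)⁻¹ • ∑ i, zhat t i w) + δbar t w)‖ ^ 2 ∂μ ≤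
        ω * ∫ w, ‖((n : ℝ)⁻¹ • ∑ i, zhat t i w) + δbar t w‖ ^ 2 ∂μ)
    (hz : ∀ t i, ∫ w, ‖z t i w‖ ^ 2 ∂μ ≤ C)
    (hzint : ∀ t i, Integrable (fun w => ‖z t i w‖ ^ 2) μ)
    (hδint : ∀ t i, Integrable (fun w => ‖δ t i w‖ ^ 2) μ)
    (hzhatint : ∀ t i, Integrable (fun w => ‖zhat t i w‖ ^ 2) μ)
    (hδbarint : ∀ t, Integrable (fun w => ‖δbar t w‖ ^ 2) μ) :
    ∀ t : ℕ,
      ∫ w, ‖((n : ℝ)⁻¹ • ∑ i, δ t i w) - δbar t w‖ ^ 2 ∂μ ≤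
        32 * ω * (1 + ω) ^ 3 * C / (1 - ω) ^ 4 := by
  have hω2 : (0:ℝ) < 1 - ω := by linarith
  have hω2' : (1:ℝ) - ω ≠ 0 := hω2.ne'
  have hn0 : (0:ℝ) < n := by exact_mod_cast hn
  -- worker error bound
  have hA : ∀ t i, ∫ w, ‖δ t i w‖ ^ 2 ∂μ ≤ 2 * ω * (1 + ω) * C / (1 - ω) ^ 2 := by
    intro t
    induction t with
    | zero =>
      intro i
      simp [hδ0]
      positivity
    | succ t ih =>
      intro i
      have e0 : ∫ w, ‖δ (t + 1) i w‖ ^ 2 ∂μ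
          = ∫ w, ‖zhat t i w - (z t i w + δ t i w)‖ ^ 2 ∂μ := by
        congr 1
        funext w
        rw [hδrec t i]
        simp only
        rw [norm_sub_rev]
      rw [e0]
      refine le_trans (hcomp t i) ?_
      have hgint : Integrable
          (fun w => (1 + ω) / 2 * ‖δ t i w‖ ^ 2 + ω * (1 + ω) / (1 - ω) * ‖z t i w‖ ^ 2) μ :=
        ((hδint t i).const_mul _).add ((hzint t i).const_mul _)
      have h1 : ∫ w, ω * ‖z t i w + δ t i w‖ ^ 2 ∂μ
          ≤ ∫ w, ((1 + ω) / 2 * ‖δ t i w‖ ^ 2 + ω * (1 + ω) / (1 - ω) * ‖z t i w‖ ^ 2) ∂μ :=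
        integral_mono_of_nonneg (Filter.Eventually.of_forall fun w => by positivity) hgint
          (Filter.Eventually.of_forall fun w => pw_amgm hω0 hω1 _ _)
      rw [integral_const_mul] at h1
      have i1 : Integrable (fun w => (1 + ω) / 2 * ‖δ t i w‖ ^ 2) μ := (hδint t i).const_mul _
      have i2 : Integrable (fun w => ω * (1 + ω) / (1 - ω) * ‖z t i w‖ ^ 2) μ :=
        (hzint t i).const_mul _
      rw [integral_add i1 i2, integral_const_mul, integral_const_mul] at h1
      refine le_trans h1 ?_
      have step1 : (1 + ω) / 2 * ∫ w, ‖δ t i w‖ ^ 2 ∂μ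
          ≤ (1 + ω) / 2 * (2 * ω * (1 + ω) * C / (1 - ω) ^ 2) :=
        mul_le_mul_of_nonneg_left (ih i) (by positivity)
      have step2 : ω * (1 + ω) / (1 - ω) * ∫ w, ‖z t i w‖ ^ 2 ∂μ
          ≤ ω * (1 + ω) / (1 - ω) * C :=
        mul_le_mul_of_nonneg_left (hz t i) (by positivity)
      have eq1 : (1 + ω) / 2 * (2 * ω * (1 + ω) * C / (1 - ω) ^ 2) + ω * (1 + ω) / (1 - ω) * C
          = 2 * ω * (1 + ω) * C / (1 - ω) ^ 2 := by
        field_simp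
        ring
      linarith
  have hA0 : (0:ℝ) ≤ 2 * ω * (1 + ω) * C / (1 - ω) ^ 2 := by positivity
  -- compressed-vector second moment bound
  have hD : ∀ t i, ∫ w, ‖zhat t i w‖ ^ 2 ∂μ
      ≤ 3 * C + 6 * (2 * ω * (1 + ω) * C / (1 - ω) ^ 2) := by
    intro t i
    have e : ∀ w, zhat t i w = z t i w + δ t i w - δ (t + 1) i w := by
      intro w
      have h := congrFun (hδrec t i) w
      rw [h]
      abel
    have hgint : Integrable
        (fun w => 3 * ‖z t i w‖ ^ 2 + 3 * ‖δ t i w‖ ^ 2 + 3 * ‖δ (t + 1) i w‖ ^ 2) μ :=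
      (((hzint t i).const_mul _).add ((hδint t i).const_mul _)).add ((hδint (t + 1) i).const_mul _)
    have h1 : ∫ w, ‖zhat t i w‖ ^ 2 ∂μ
        ≤ ∫ w, (3 * ‖z t i w‖ ^ 2 + 3 * ‖δ t i w‖ ^ 2 + 3 * ‖δ (t + 1) i w‖ ^ 2) ∂μ := by
      refine integral_mono (hzhatint t i) hgint fun w => ?_
      rw [e w]
      exact pw3 _ _ _
    have i1 : Integrable (fun w => 3 * ‖z t i w‖ ^ 2) μ := (hzint t i).const_mul _
    have i2 : Integrable (fun w => 3 * ‖δ t i w‖ ^ 2) μ := (hδint t i).const_mul _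
    have i3 : Integrable (fun w => 3 * ‖δ (t + 1) i w‖ ^ 2) μ := (hδint (t + 1) i).const_mul _
    have i12 : Integrable (fun w => 3 * ‖z t i w‖ ^ 2 + 3 * ‖δ t i w‖ ^ 2) μ := i1.add i2
    rw [integral_add i12 i3, integral_add i1 i2,
      integral_const_mul, integral_const_mul, integral_const_mul] at h1
    have := hz t i
    have := hA t i
    have := hA (t + 1) i
    linarith
  -- server error bound
  have hB : ∀ t, ∫ w, ‖δbar t w‖ ^ 2 ∂μ
      ≤ 2 * ω * (1 + ω) * (3 * C + 6 * (2 * ω * (1 + ω) * C / (1 - ω) ^ 2)) / (1 - ω) ^ 2 := by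
    intro t
    induction t with
    | zero =>
      simp [hδbar0]
      positivity
    | succ t ih =>
      have e0 : ∫ w, ‖δbar (t + 1) w‖ ^ 2 ∂μ
          = ∫ w, ‖cbar t w - (((n : ℝ)⁻¹ • ∑ i, zhat t i w) + δbar t w)‖ ^ 2 ∂μ := by
        congr 1
        funext w
        rw [hδbarrec t]
        simp only
        rw [norm_sub_rev]
      rw [e0]
      refine le_trans (hcompbar t) ?_
      have hsumint : Integrable (fun w => ∑ i, ‖zhat t i w‖ ^ 2) μ :=
        integrable_finset_sum _ fun i _ => hzhatint t i
      have hgint : Integrable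
          (fun w => (1 + ω) / 2 * ‖δbar t w‖ ^ 2
            + ω * (1 + ω) / (1 - ω) * ((n : ℝ)⁻¹ * ∑ i, ‖zhat t i w‖ ^ 2)) μ :=
        ((hδbarint t).const_mul _).add ((hsumint.const_mul _).const_mul _)
      have h1 : ∫ w, ω * ‖((n : ℝ)⁻¹ • ∑ i, zhat t i w) + δbar t w‖ ^ 2 ∂μ
          ≤ ∫ w, ((1 + ω) / 2 * ‖δbar t w‖ ^ 2
            + ω * (1 + ω) / (1 - ω) * ((n : ℝ)⁻¹ * ∑ i, ‖zhat t i w‖ ^ 2)) ∂μ := by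
        refine integral_mono_of_nonneg (Filter.Eventually.of_forall fun w => by positivity) hgint
          (Filter.Eventually.of_forall fun w => ?_)
        have p1 := pw_amgm (E := EuclideanSpace ℝ (Fin d)) hω0 hω1
          ((n : ℝ)⁻¹ • ∑ i, zhat t i w) (δbar t w)
        have p2 : ω * (1 + ω) / (1 - ω) * ‖(n : ℝ)⁻¹ • ∑ i, zhat t i w‖ ^ 2
            ≤ ω * (1 + ω) / (1 - ω) * ((n : ℝ)⁻¹ * ∑ i, ‖zhat t i w‖ ^ 2) :=
          mul_le_mul_of_nonneg_left (pw_avg hn _) (by positivity)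
        linarith
      rw [integral_const_mul] at h1
      have i1 : Integrable (fun w => (1 + ω) / 2 * ‖δbar t w‖ ^ 2) μ := (hδbarint t).const_mul _
      have i2 : Integrable
          (fun w => ω * (1 + ω) / (1 - ω) * ((n : ℝ)⁻¹ * ∑ i, ‖zhat t i w‖ ^ 2)) μ :=
        (hsumint.const_mul _).const_mul _
      rw [integral_add i1 i2, integral_const_mul, integral_const_mul, integral_const_mul,
        integral_finset_sum _ (fun i _ => hzhatint t i)] at h1
      refine le_trans h1 ?_
      have hsumbd : ∑ i : Fin n, ∫ w, ‖zhat t i w‖ ^ 2 ∂μ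
          ≤ (n : ℝ) * (3 * C + 6 * (2 * ω * (1 + ω) * C / (1 - ω) ^ 2)) := by
        calc ∑ i : Fin n, ∫ w, ‖zhat t i w‖ ^ 2 ∂μ
            ≤ ∑ _i : Fin n, (3 * C + 6 * (2 * ω * (1 + ω) * C / (1 - ω) ^ 2)) :=
              Finset.sum_le_sum fun i _ => hD t i
          _ = (n : ℝ) * (3 * C + 6 * (2 * ω * (1 + ω) * C / (1 - ω) ^ 2)) := by
              simp [Finset.sum_const]
              ring
      have step1 : (1 + ω) / 2 * ∫ w, ‖δbar t w‖ ^ 2 ∂μ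
          ≤ (1 + ω) / 2
            * (2 * ω * (1 + ω) * (3 * C + 6 * (2 * ω * (1 + ω) * C / (1 - ω) ^ 2)) / (1 - ω) ^ 2) :=
        mul_le_mul_of_nonneg_left ih (by positivity)
      have step2 : ω * (1 + ω) / (1 - ω) * ((n : ℝ)⁻¹ * ∑ i, ∫ w, ‖zhat t i w‖ ^ 2 ∂μ)
          ≤ ω * (1 + ω) / (1 - ω) * (3 * C + 6 * (2 * ω * (1 + ω) * C / (1 - ω) ^ 2)) := by
        refine mul_le_mul_of_nonneg_left ?_ (by positivity)
        calc (n : ℝ)⁻¹ * ∑ i, ∫ w, ‖zhat t i w‖ ^ 2 ∂μ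
            ≤ (n : ℝ)⁻¹ * ((n : ℝ) * (3 * C + 6 * (2 * ω * (1 + ω) * C / (1 - ω) ^ 2))) :=
              mul_le_mul_of_nonneg_left hsumbd (by positivity)
          _ = 3 * C + 6 * (2 * ω * (1 + ω) * C / (1 - ω) ^ 2) := by
              field_simp
      have eq1 : (1 + ω) / 2
            * (2 * ω * (1 + ω) * (3 * C + 6 * (2 * ω * (1 + ω) * C / (1 - ω) ^ 2)) / (1 - ω) ^ 2)
          + ω * (1 + ω) / (1 - ω) * (3 * C + 6 * (2 * ω * (1 + ω) * C / (1 - ω) ^ 2))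
          = 2 * ω * (1 + ω) * (3 * C + 6 * (2 * ω * (1 + ω) * C / (1 - ω) ^ 2)) / (1 - ω) ^ 2 := by
        field_simp
        ring
      linarith
  -- final bound
  intro t
  have hsumδint : Integrable (fun w => ∑ i, ‖δ t i w‖ ^ 2) μ :=
    integrable_finset_sum _ fun i _ => hδint t i
  have hgint : Integrable
      (fun w => 2 * ((n : ℝ)⁻¹ * ∑ i, ‖δ t i w‖ ^ 2) + 2 * ‖δbar t w‖ ^ 2) μ :=
    ((hsumδint.const_mul _).const_mul _).add ((hδbarint t).const_mul _)
  have h1 : ∫ w, ‖((n : ℝ)⁻¹ • ∑ i, δ t i w) - δbar t w‖ ^ 2 ∂μ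
      ≤ ∫ w, (2 * ((n : ℝ)⁻¹ * ∑ i, ‖δ t i w‖ ^ 2) + 2 * ‖δbar t w‖ ^ 2) ∂μ := by
    refine integral_mono_of_nonneg (Filter.Eventually.of_forall fun w => by positivity) hgint
      (Filter.Eventually.of_forall fun w => ?_)
    have p1 := pw2 ((n : ℝ)⁻¹ • ∑ i, δ t i w) (δbar t w)
    have p2 : (2:ℝ) * ‖(n : ℝ)⁻¹ • ∑ i, δ t i w‖ ^ 2
        ≤ 2 * ((n : ℝ)⁻¹ * ∑ i, ‖δ t i w‖ ^ 2) :=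
      mul_le_mul_of_nonneg_left (pw_avg hn _) (by norm_num)
    linarith
  have i1 : Integrable (fun w => 2 * ((n : ℝ)⁻¹ * ∑ i, ‖δ t i w‖ ^ 2)) μ :=
    (hsumδint.const_mul _).const_mul _
  have i2 : Integrable (fun w => 2 * ‖δbar t w‖ ^ 2) μ := (hδbarint t).const_mul _
  rw [integral_add i1 i2, integral_const_mul, integral_const_mul, integral_const_mul,
    integral_finset_sum _ (fun i _ => hδint t i)] at h1
  have hsumbd : ∑ i : Fin n, ∫ w, ‖δ t i w‖ ^ 2 ∂μ
      ≤ (n : ℝ) * (2 * ω * (1 + ω) * C / (1 - ω) ^ 2) := by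
    calc ∑ i : Fin n, ∫ w, ‖δ t i w‖ ^ 2 ∂μ
        ≤ ∑ _i : Fin n, (2 * ω * (1 + ω) * C / (1 - ω) ^ 2) :=
          Finset.sum_le_sum fun i _ => hA t i
      _ = (n : ℝ) * (2 * ω * (1 + ω) * C / (1 - ω) ^ 2) := by
          simp [Finset.sum_const, nsmul_eq_mul]
  have step1 : (2:ℝ) * ((n : ℝ)⁻¹ * ∑ i, ∫ w, ‖δ t i w‖ ^ 2 ∂μ)
      ≤ 2 * (2 * ω * (1 + ω) * C / (1 - ω) ^ 2) := by
    refine mul_le_mul_of_nonneg_left ?_ (by norm_num)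
    calc (n : ℝ)⁻¹ * ∑ i, ∫ w, ‖δ t i w‖ ^ 2 ∂μ
        ≤ (n : ℝ)⁻¹ * ((n : ℝ) * (2 * ω * (1 + ω) * C / (1 - ω) ^ 2)) :=
          mul_le_mul_of_nonneg_left hsumbd (by positivity)
      _ = 2 * ω * (1 + ω) * C / (1 - ω) ^ 2 := by field_simp
  have step2 : (2:ℝ) * ∫ w, ‖δbar t w‖ ^ 2 ∂μ
      ≤ 2 * (2 * ω * (1 + ω) * (3 * C + 6 * (2 * ω * (1 + ω) * C / (1 - ω) ^ 2)) / (1 - ω) ^ 2) :=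
    mul_le_mul_of_nonneg_left (hB t) (by norm_num)
  have final : 2 * (2 * ω * (1 + ω) * C / (1 - ω) ^ 2)
      + 2 * (2 * ω * (1 + ω) * (3 * C + 6 * (2 * ω * (1 + ω) * C / (1 - ω) ^ 2)) / (1 - ω) ^ 2)
      ≤ 32 * ω * (1 + ω) ^ 3 * C / (1 - ω) ^ 4 := by
    rw [← sub_nonneg]
    have expand : 32 * ω * (1 + ω) ^ 3 * C / (1 - ω) ^ 4
        - (2 * (2 * ω * (1 + ω) * C / (1 - ω) ^ 2)
          + 2 * (2 * ω * (1 + ω) * (3 * C + 6 * (2 * ω * (1 + ω) * C / (1 - ω) ^ 2)) / (1 - ω) ^ 2))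
        = ω * (1 + ω) * C * (16 + 48 * ω - 32 * ω ^ 2) / (1 - ω) ^ 4 := by
      field_simp
      ring
    rw [expand]
    have hb : (0:ℝ) ≤ 16 + 48 * ω - 32 * ω ^ 2 := by
      nlinarith [mul_nonneg hω0 hω2.le]
    have : (0:ℝ) ≤ ω * (1 + ω) * C * (16 + 48 * ω - 32 * ω ^ 2) :=
      mul_nonneg (mul_nonneg (mul_nonneg hω0 (by linarith)) hC.le) hb
    positivity
  linarith
end
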